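/- arXiv:2009.09980 — 5 statements merged into one kernel-verified Lean document; each statement's English description precedes it below -/
import Mathlib

section
/- Let φ : S^1 → S^1 be continuous, and suppose φ(−p) = R_p(φ(p)) for all p ∈ S^1, where R_p is reflection across the line through the origin perpendicular to p. Then φ has degree 1. -/
/-!
Write φ(z) = z ψ(z); the reflection symmetry says exactly that ψ(-z) ψ(z) = 1. Lift
t ↦ ψ(exp(it)) through the covering ℝ → S¹ to a continuous F. Then F(t + π) + F(t) lifts the
constant map 1, so it is constant, and comparing it at t and t + π shows that F is 2π-periodic.
Hence ψ = exp(iΘ) for a continuous Θ : S¹ → ℝ, and z exp(i(1 - s)Θ(z)) deforms φ into the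
identity.
-/

open Metric ContinuousMap

open Real Function

namespace Circle

lemma exp_pi : exp π = -1 := Subtype.ext <| by simp [coe_exp, Complex.exp_pi_mul_I]

theorem exists_lift {A : Type*} [TopologicalSpace A] [SimplyConnectedSpace A]
    [LocallyPathConnectedSpace A] (f : C(A, Circle)) : ∃ F : C(A, ℝ), ∀ a, exp (F a) = f a := by
  obtain ⟨a₀⟩ := (inferInstance : Nonempty A)
  obtain ⟨F, -, hF⟩ :=
    (isCoveringMap_exp.existsUnique_continuousMap_lifts f a₀ _ (exp_arg (f a₀))).exists
  exact ⟨F, congrFun hF⟩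

theorem exists_continuousMap_comp_exp {α : Type*} [TopologicalSpace α] (F : C(ℝ, α))
    (hF : Periodic F (2 * π)) : ∃ G : C(Circle, α), ∀ t, G (exp t) = F t := by
  have hG : ∀ t, F (Complex.arg (exp t)) = F t := fun t => by
    obtain ⟨m, hm⟩ := exp_eq_exp.1 (exp_arg (exp t))
    rw [hm, hF.int_mul m]
  refine ⟨⟨fun z => F (Complex.arg z), ?_⟩, hG⟩
  rw [(isCoveringMap_exp.isQuotientMap exp_surjective).continuous_iff]
  exact F.continuous.congr fun t => (hG t).symm

theorem exists_log_of_map_neg_mul_self (ψ : C(Circle, Circle)) (hψ : ∀ z, ψ (-z) * ψ z = 1) :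
    ∃ Θ : C(Circle, ℝ), ∀ z, exp (Θ z) = ψ z := by
  obtain ⟨F, hF⟩ := exists_lift (ψ.comp exp)
  let H : C(ℝ, ℝ) := F.comp (.addRight π) + F
  have hH : ∀ t, H t = H 0 := fun t =>
    isCoveringMap_exp.const_of_comp H.continuous (fun a a' => by
      simp [H, exp_add, hF, exp_pi, hψ]) t 0
  have hF_periodic : Periodic F (2 * π) := fun t => by
    have hHt := (hH (t + π)).trans (hH t).symm
    simp only [H, ContinuousMap.add_apply, ContinuousMap.comp_apply,
      ContinuousMap.coe_addRight] at hHt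
    rw [add_assoc, ← two_mul] at hHt
    linarith
  obtain ⟨Θ, hΘ⟩ := exists_continuousMap_comp_exp F hF_periodic
  refine ⟨Θ, fun z => ?_⟩
  obtain ⟨t, rfl⟩ := exp_surjective z
  rw [hΘ, hF]
  rfl

end Circle

theorem ContinuousMap.homotopic_of_eq_mul_exp {X : Type*} [TopologicalSpace X]
    {f g : C(X, Circle)} (Θ : C(X, ℝ)) (hfg : ∀ x, f x = g x * Circle.exp (Θ x)) :
    f.Homotopic g :=
  ⟨{ toFun := fun q => g q.2 * Circle.exp ((1 - (q.1 : ℝ)) * Θ q.2)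
     continuous_toFun := by fun_prop
     map_zero_left := fun x => by simp [hfg]
     map_one_left := fun x => by simp }⟩

theorem Circle.homotopic_id_of_map_neg_mul_self {φ : C(Circle, Circle)}
    (hφ : ∀ z, φ (-z) * φ z = -z ^ 2) : φ.Homotopic (ContinuousMap.id Circle) := by
  let ψ : C(Circle, Circle) := φ * (ContinuousMap.id Circle)⁻¹
  have hψ : ∀ z, ψ (-z) * ψ z = 1 := fun z => by
    calc ψ (-z) * ψ z = φ (-z) * φ z * (-z ^ 2)⁻¹ := by
          simp only [ψ, ContinuousMap.mul_apply, ContinuousMap.inv_apply, ContinuousMap.id_apply,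
            inv_neg, mul_neg, neg_mul, neg_inj, pow_two, mul_inv]
          ac_rfl
      _ = 1 := by rw [hφ, mul_inv_cancel]
  obtain ⟨Θ, hΘ⟩ := Circle.exists_log_of_map_neg_mul_self ψ hψ
  exact ContinuousMap.homotopic_of_eq_mul_exp Θ fun z => by simp [hΘ, ψ]

/-- If a continuous self-map φ of the circle S¹ (unit complex numbers) satisfies the
reflection symmetry φ(−p) = R_p(φ(p)) = −p² ⋅ conj(φ(p)) for all p ∈ S¹, then φ has
degree 1.  Here `deg` is any homotopy-invariant degree function with deg(id) = 1. -/
theorem circle_map_reflection_symmetry_degree_one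
    (φ : C(sphere (0 : ℂ) 1, sphere (0 : ℂ) 1))
    (h : ∀ p : sphere (0 : ℂ) 1,
      (φ (-p) : ℂ) = -(p : ℂ) ^ 2 * (starRingEnd ℂ) (φ p : ℂ))
    (deg : C(sphere (0 : ℂ) 1, sphere (0 : ℂ) 1) → ℤ)
    (hdeg_homotopy : ∀ f g, f.Homotopic g → deg f = deg g)
    (hdeg_id : deg (ContinuousMap.id _) = 1) :
    deg φ = 1 := by
  -- `Circle` is definitionally the unit sphere of `ℂ`, with the same topology and negation.
  let φ' : C(Circle, Circle) := φ
  have hφ' : ∀ z, φ' (-z) * φ' z = -z ^ 2 := fun z => Subtype.ext <| by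
    rw [Circle.coe_mul, show (φ' (-z) : ℂ) = -(z : ℂ) ^ 2 * (starRingEnd ℂ) (φ' z) from h z,
      mul_assoc, Complex.conj_mul', Circle.norm_coe]
    simp
  exact (hdeg_homotopy φ _ (Circle.homotopic_id_of_map_neg_mul_self hφ')).trans hdeg_id
end

section
/- Let ω be a positive Lebesgue-measurable radial weight on ℝ^n, and let Ω_L, Ω_U be measurable sets with V_ω(Ω_L) + V_ω(Ω_U) = 2 V_ω(B) < ∞, where B is a ball centered at the origin and V_ω(E) = ∫_E ω(|x|) dx. If h : [0,∞) → ℝ is decreasing, then ∫_{Ω_L} h(|x|)ω(|x|) dx + ∫_{Ω_U} h(|x|)ω(|x|) dx ≤ 2 ∫_B h(|x|)ω(|x|) dx. -/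
open MeasureTheory Metric

lemma wmt_aux (n : ℕ) (ω h : ℝ → ℝ) (hω_pos : ∀ r, 0 < ω r)
    (hh : AntitoneOn h (Set.Ici 0))
    (Ω : Set (EuclideanSpace ℝ (Fin n))) (hΩ : MeasurableSet Ω)
    (hωΩ : IntegrableOn (fun x => ω ‖x‖) Ω)
    (hωB : IntegrableOn (fun x => ω ‖x‖) (ball (0 : EuclideanSpace ℝ (Fin n)) 1))
    (hhΩ : IntegrableOn (fun x => h ‖x‖ * ω ‖x‖) Ω)
    (hhB : IntegrableOn (fun x => h ‖x‖ * ω ‖x‖) (ball (0 : EuclideanSpace ℝ (Fin n)) 1)) :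
    (∫ x in Ω, h ‖x‖ * ω ‖x‖)
      ≤ (∫ x in ball (0 : EuclideanSpace ℝ (Fin n)) 1, h ‖x‖ * ω ‖x‖)
        + h 1 * ((∫ x in Ω, ω ‖x‖)
          - ∫ x in ball (0 : EuclideanSpace ℝ (Fin n)) 1, ω ‖x‖) := by
  set B := ball (0 : EuclideanSpace ℝ (Fin n)) 1 with hBdef
  have hBm : MeasurableSet B := measurableSet_ball
  have e1 : (∫ x in Ω ∩ B, h ‖x‖ * ω ‖x‖) + (∫ x in Ω \ B, h ‖x‖ * ω ‖x‖)
      = ∫ x in Ω, h ‖x‖ * ω ‖x‖ := integral_inter_add_diff hBm hhΩ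
  have e2 : (∫ x in B ∩ Ω, h ‖x‖ * ω ‖x‖) + (∫ x in B \ Ω, h ‖x‖ * ω ‖x‖)
      = ∫ x in B, h ‖x‖ * ω ‖x‖ := integral_inter_add_diff hΩ hhB
  have e3 : (∫ x in Ω ∩ B, ω ‖x‖) + (∫ x in Ω \ B, ω ‖x‖)
      = ∫ x in Ω, ω ‖x‖ := integral_inter_add_diff hBm hωΩ
  have e4 : (∫ x in B ∩ Ω, ω ‖x‖) + (∫ x in B \ Ω, ω ‖x‖)
      = ∫ x in B, ω ‖x‖ := integral_inter_add_diff hΩ hωB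
  rw [Set.inter_comm B Ω] at e2 e4
  have h1mem : (1 : ℝ) ∈ Set.Ici (0 : ℝ) := by norm_num
  -- inequality on Ω \ B
  have i1 : (∫ x in Ω \ B, h ‖x‖ * ω ‖x‖) ≤ h 1 * ∫ x in Ω \ B, ω ‖x‖ := by
    rw [← integral_const_mul]
    apply setIntegral_mono_on (hhΩ.mono_set Set.diff_subset)
      ((hωΩ.mono_set Set.diff_subset).const_mul (h 1)) (hΩ.diff hBm)
    intro x hx
    have hx1 : 1 ≤ ‖x‖ := by
      have := hx.2
      rw [hBdef, mem_ball_zero_iff] at this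
      linarith [not_lt.mp this]
    exact mul_le_mul_of_nonneg_right
      (hh h1mem (Set.mem_Ici.mpr (norm_nonneg x)) hx1) (hω_pos _).le
  -- inequality on B \ Ω
  have i2 : h 1 * (∫ x in B \ Ω, ω ‖x‖) ≤ ∫ x in B \ Ω, h ‖x‖ * ω ‖x‖ := by
    rw [← integral_const_mul]
    apply setIntegral_mono_on ((hωB.mono_set Set.diff_subset).const_mul (h 1))
      (hhB.mono_set Set.diff_subset) (hBm.diff hΩ)
    intro x hx
    have hx1 : ‖x‖ ≤ 1 := by
      have := hx.1
      rw [hBdef, mem_ball_zero_iff] at this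
      linarith
    exact mul_le_mul_of_nonneg_right
      (hh (Set.mem_Ici.mpr (norm_nonneg x)) h1mem hx1) (hω_pos _).le
  have key : h 1 * ((∫ x in Ω, ω ‖x‖) - ∫ x in B, ω ‖x‖)
      = h 1 * (∫ x in Ω \ B, ω ‖x‖) - h 1 * (∫ x in B \ Ω, ω ‖x‖) := by
    rw [← e3, ← e4]; ring
  linarith [i1, i2, e1, e2, key]

/-- Weighted mass transplantation: if ω is a positive measurable radial weight on ℝⁿ,
Ω_L and Ω_U are measurable sets whose ω-weighted volumes add up to twice the weighted
volume of the unit ball B (all finite), and h : [0,∞) → ℝ is decreasing, then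
∫_{Ω_L} hω + ∫_{Ω_U} hω ≤ 2∫_B hω. -/
theorem weighted_mass_transplantation (n : ℕ) (hn : 1 ≤ n)
    (ω h : ℝ → ℝ) (hω_meas : Measurable ω) (hω_pos : ∀ r, 0 < ω r)
    (hh : AntitoneOn h (Set.Ici 0))
    (ΩL ΩU : Set (EuclideanSpace ℝ (Fin n)))
    (hL : MeasurableSet ΩL) (hU : MeasurableSet ΩU)
    (hωL : IntegrableOn (fun x => ω ‖x‖) ΩL)
    (hωU : IntegrableOn (fun x => ω ‖x‖) ΩU)
    (hωB : IntegrableOn (fun x => ω ‖x‖) (ball (0 : EuclideanSpace ℝ (Fin n)) 1))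
    (hvol : (∫ x in ΩL, ω ‖x‖) + (∫ x in ΩU, ω ‖x‖)
      = 2 * ∫ x in ball (0 : EuclideanSpace ℝ (Fin n)) 1, ω ‖x‖)
    (hhωL : IntegrableOn (fun x => h ‖x‖ * ω ‖x‖) ΩL)
    (hhωU : IntegrableOn (fun x => h ‖x‖ * ω ‖x‖) ΩU)
    (hhωB : IntegrableOn (fun x => h ‖x‖ * ω ‖x‖) (ball (0 : EuclideanSpace ℝ (Fin n)) 1)) :
    (∫ x in ΩL, h ‖x‖ * ω ‖x‖) + (∫ x in ΩU, h ‖x‖ * ω ‖x‖)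
      ≤ 2 * ∫ x in ball (0 : EuclideanSpace ℝ (Fin n)) 1, h ‖x‖ * ω ‖x‖ := by
  have kL := wmt_aux n ω h hω_pos hh ΩL hL hωL hωB hhωL hhωB
  have kU := wmt_aux n ω h hω_pos hh ΩU hU hωU hωB hhωU hhωB
  set a := ∫ x in ΩL, ω ‖x‖
  set b := ∫ x in ΩU, ω ‖x‖
  set c := ∫ x in ball (0 : EuclideanSpace ℝ (Fin n)) 1, ω ‖x‖
  have hz : h 1 * (a - c) + h 1 * (b - c) = 0 := by
    have hac : a - c = -(b - c) := by linarith
    rw [hac]; ring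
  linarith [kL, kU]
end

section
/- In the setting of the weighted mass transplantation lemma, if h is strictly decreasing and equality holds, i.e. ∫_{Ω_L} h ω dx + ∫_{Ω_U} h ω dx = 2 ∫_B h ω dx, then Ω_L = B and Ω_U = B up to sets of Lebesgue measure zero. -/
/-!
Subtracting `h 1` times the mass balance from the assumed equality turns it into
`∫_{Ω_L} f + ∫_{Ω_U} f = 2 ∫_B f` for `f x = (h ‖x‖ - h 1) ω ‖x‖`. Since `h` is strictly
decreasing and `ω > 0`, `f` is positive inside `B` and negative outside it, except on the null
sphere `‖x‖ = 1`. So `∫_Ω f ≤ ∫_B f` for every `Ω`, because passing from `Ω` to `B` exchanges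
`Ω \ B` for `B \ Ω`, and equality forces both pieces to be null. The balance makes both
inequalities equalities.
-/

open MeasureTheory Metric
open scoped symmDiff

section SetIntegralComparison

variable {α : Type*} [MeasurableSpace α] {μ : Measure α} {f : α → ℝ} {s t : Set α}

theorem measure_eq_zero_of_setIntegral_eq_zero_of_ae_pos (hs : MeasurableSet s)
    (hf : IntegrableOn f s μ) (hpos : ∀ᵐ x ∂μ, x ∈ s → 0 < f x)
    (hzero : ∫ x in s, f x ∂μ = 0) : μ s = 0 := by
  have hpos' : ∀ᵐ x ∂μ.restrict s, 0 < f x := (ae_restrict_iff' hs).2 hpos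
  have hf0 : f =ᵐ[μ.restrict s] 0 :=
    (setIntegral_eq_zero_iff_of_nonneg_ae (hpos'.mono fun _ hx => hx.le) hf).1 hzero
  have hfalse : ∀ᵐ _ ∂μ.restrict s, False :=
    (hpos'.and hf0).mono fun _ hx => hx.1.ne' hx.2
  rwa [Filter.eventually_false_iff_eq_bot, ae_eq_bot, Measure.restrict_eq_zero] at hfalse

theorem setIntegral_sub_setIntegral_eq_diff (hs : MeasurableSet s) (ht : MeasurableSet t)
    (hfs : IntegrableOn f s μ) (hft : IntegrableOn f t μ) :
    (∫ x in s, f x ∂μ) - ∫ x in t, f x ∂μ = (∫ x in s \ t, f x ∂μ) - ∫ x in t \ s, f x ∂μ := by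
  rw [← integral_inter_add_sdiff ht hfs, ← integral_inter_add_sdiff hs hft, Set.inter_comm]
  ring

theorem setIntegral_le_setIntegral_of_ae_diff (hs : MeasurableSet s) (ht : MeasurableSet t)
    (hfs : IntegrableOn f s μ) (hft : IntegrableOn f t μ)
    (hneg : ∀ᵐ x ∂μ, x ∈ s \ t → f x ≤ 0) (hpos : ∀ᵐ x ∂μ, x ∈ t \ s → 0 ≤ f x) :
    ∫ x in s, f x ∂μ ≤ ∫ x in t, f x ∂μ := by
  have hdiff := setIntegral_sub_setIntegral_eq_diff hs ht hfs hft
  have hst := setIntegral_nonpos_ae (hs.diff ht) hneg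
  have hts := setIntegral_nonneg_ae (ht.diff hs) hpos
  linarith

theorem measure_symmDiff_eq_zero_of_setIntegral_eq (hs : MeasurableSet s) (ht : MeasurableSet t)
    (hfs : IntegrableOn f s μ) (hft : IntegrableOn f t μ)
    (hneg : ∀ᵐ x ∂μ, x ∈ s \ t → f x < 0) (hpos : ∀ᵐ x ∂μ, x ∈ t \ s → 0 < f x)
    (heq : ∫ x in s, f x ∂μ = ∫ x in t, f x ∂μ) : μ (s ∆ t) = 0 := by
  have hdiff := setIntegral_sub_setIntegral_eq_diff hs ht hfs hft
  have hst := setIntegral_nonpos_ae (hs.diff ht) (hneg.mono fun _ h hx => (h hx).le)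
  have hts := setIntegral_nonneg_ae (ht.diff hs) (hpos.mono fun _ h hx => (h hx).le)
  have hst0 : ∫ x in s \ t, -f x ∂μ = 0 := by rw [integral_neg]; linarith
  have hts0 : ∫ x in t \ s, f x ∂μ = 0 := by linarith
  rw [Set.symmDiff_def]
  refine measure_union_null ?_ ?_
  · exact measure_eq_zero_of_setIntegral_eq_zero_of_ae_pos (hs.diff ht)
      (hfs.mono_set Set.sdiff_subset).neg (hneg.mono fun _ h hx => neg_pos.2 (h hx)) hst0
  · exact measure_eq_zero_of_setIntegral_eq_zero_of_ae_pos (ht.diff hs)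
      (hft.mono_set Set.sdiff_subset) hpos hts0

theorem integrableOn_sub_const_mul {u v : α → ℝ} (c : ℝ)
    (huv : IntegrableOn (fun x => u x * v x) s μ) (hv : IntegrableOn v s μ) : IntegrableOn (fun x => (u x - c) * v x) s μ := by
  refine (huv.sub (hv.const_mul c)).congr_fun_ae (ae_of_all _ fun x => ?_)
  simp only [Pi.sub_apply, sub_mul]

theorem setIntegral_sub_const_mul {u v : α → ℝ} (c : ℝ)
    (huv : IntegrableOn (fun x => u x * v x) s μ) (hv : IntegrableOn v s μ) :
    ∫ x in s, (u x - c) * v x ∂μ = (∫ x in s, u x * v x ∂μ) - c * ∫ x in s, v x ∂μ := by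
  simp only [sub_mul]
  rw [integral_sub huv (hv.const_mul c), integral_const_mul]

end SetIntegralComparison

theorem radial_pos_of_mem_ball {E : Type*} [SeminormedAddCommGroup E] {ω h : ℝ → ℝ} {r : ℝ}
    (hω : ∀ t, 0 < ω t) (hh : StrictAntiOn h (Set.Ici 0)) (hr : 0 ≤ r) {x : E}
    (hx : x ∈ ball (0 : E) r) : 0 < (h ‖x‖ - h r) * ω ‖x‖ := by
  rw [mem_ball_zero_iff] at hx
  exact mul_pos (sub_pos.2 (hh (norm_nonneg x) hr hx)) (hω _)

section RadialProfile

variable {E : Type*} [NormedAddCommGroup E] [NormedSpace ℝ E] [MeasurableSpace E] [BorelSpace E]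
  [FiniteDimensional ℝ E] {μ : Measure E} [μ.IsAddHaarMeasure] {ω h : ℝ → ℝ} {r : ℝ}

theorem ae_radial_neg_of_notMem_ball (hω : ∀ t, 0 < ω t) (hh : StrictAntiOn h (Set.Ici 0))
    (hr : 0 < r) : ∀ᵐ x ∂μ, x ∉ ball (0 : E) r → (h ‖x‖ - h r) * ω ‖x‖ < 0 := by
  have hsphere : ∀ᵐ x ∂μ, x ∉ sphere (0 : E) r :=
    measure_eq_zero_iff_ae_notMem.1 (Measure.addHaar_sphere_of_ne_zero μ 0 hr.ne')
  filter_upwards [hsphere] with x hxs hxb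
  rw [mem_ball_zero_iff, not_lt] at hxb
  rw [mem_sphere_zero_iff_norm] at hxs
  exact mul_neg_of_neg_of_pos (sub_neg.2 (hh hr.le (norm_nonneg x) (hxb.lt_of_ne' hxs))) (hω _)

variable {Ω : Set E} (hω : ∀ t, 0 < ω t) (hh : StrictAntiOn h (Set.Ici 0)) (hr : 0 < r)
  (hΩ : MeasurableSet Ω) (hfΩ : IntegrableOn (fun x => (h ‖x‖ - h r) * ω ‖x‖) Ω μ)
  (hfB : IntegrableOn (fun x => (h ‖x‖ - h r) * ω ‖x‖) (ball (0 : E) r) μ)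
include hω hh hr hΩ hfΩ hfB

theorem setIntegral_radial_le_setIntegral_ball :
    ∫ x in Ω, (h ‖x‖ - h r) * ω ‖x‖ ∂μ ≤ ∫ x in ball (0 : E) r, (h ‖x‖ - h r) * ω ‖x‖ ∂μ :=
  setIntegral_le_setIntegral_of_ae_diff hΩ measurableSet_ball hfΩ hfB
    ((ae_radial_neg_of_notMem_ball hω hh hr).mono fun _ hneg hx => (hneg hx.2).le)
    (Filter.Eventually.of_forall fun _ hx => (radial_pos_of_mem_ball hω hh hr.le hx.1).le)

theorem measure_symmDiff_ball_eq_zero_of_setIntegral_radial_eq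
    (heq : ∫ x in Ω, (h ‖x‖ - h r) * ω ‖x‖ ∂μ
      = ∫ x in ball (0 : E) r, (h ‖x‖ - h r) * ω ‖x‖ ∂μ) :
    μ (Ω ∆ ball (0 : E) r) = 0 :=
  measure_symmDiff_eq_zero_of_setIntegral_eq hΩ measurableSet_ball hfΩ hfB
    ((ae_radial_neg_of_notMem_ball hω hh hr).mono fun _ hneg hx => hneg hx.2)
    (Filter.Eventually.of_forall fun _ hx => radial_pos_of_mem_ball hω hh hr.le hx.1) heq

end RadialProfile

theorem weighted_mass_transplantation_equality_general (n : ℕ)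
    (ω h : ℝ → ℝ) (hω_pos : ∀ r, 0 < ω r)
    (hh : StrictAntiOn h (Set.Ici 0))
    (ΩL ΩU : Set (EuclideanSpace ℝ (Fin n)))
    (hL : MeasurableSet ΩL) (hU : MeasurableSet ΩU)
    (hωL : IntegrableOn (fun x => ω ‖x‖) ΩL)
    (hωU : IntegrableOn (fun x => ω ‖x‖) ΩU)
    (hωB : IntegrableOn (fun x => ω ‖x‖) (ball (0 : EuclideanSpace ℝ (Fin n)) 1))
    (hvol : (∫ x in ΩL, ω ‖x‖) + (∫ x in ΩU, ω ‖x‖)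
      = 2 * ∫ x in ball (0 : EuclideanSpace ℝ (Fin n)) 1, ω ‖x‖)
    (hhωL : IntegrableOn (fun x => h ‖x‖ * ω ‖x‖) ΩL)
    (hhωU : IntegrableOn (fun x => h ‖x‖ * ω ‖x‖) ΩU)
    (hhωB : IntegrableOn (fun x => h ‖x‖ * ω ‖x‖) (ball (0 : EuclideanSpace ℝ (Fin n)) 1))
    (heq : (∫ x in ΩL, h ‖x‖ * ω ‖x‖) + (∫ x in ΩU, h ‖x‖ * ω ‖x‖)
      = 2 * ∫ x in ball (0 : EuclideanSpace ℝ (Fin n)) 1, h ‖x‖ * ω ‖x‖) :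
    volume (ΩL ∆ ball (0 : EuclideanSpace ℝ (Fin n)) 1) = 0 ∧
      volume (ΩU ∆ ball (0 : EuclideanSpace ℝ (Fin n)) 1) = 0 := by
  have hfL := integrableOn_sub_const_mul (h 1) hhωL hωL
  have hfU := integrableOn_sub_const_mul (h 1) hhωU hωU
  have hfB := integrableOn_sub_const_mul (h 1) hhωB hωB
  have hbalance : (∫ x in ΩL, (h ‖x‖ - h 1) * ω ‖x‖) + (∫ x in ΩU, (h ‖x‖ - h 1) * ω ‖x‖)
      = 2 * ∫ x in ball (0 : EuclideanSpace ℝ (Fin n)) 1, (h ‖x‖ - h 1) * ω ‖x‖ := by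
    rw [setIntegral_sub_const_mul (h 1) hhωL hωL, setIntegral_sub_const_mul (h 1) hhωU hωU,
      setIntegral_sub_const_mul (h 1) hhωB hωB]
    linear_combination heq - h 1 * hvol
  have hle_L := setIntegral_radial_le_setIntegral_ball hω_pos hh one_pos hL hfL hfB
  have hle_U := setIntegral_radial_le_setIntegral_ball hω_pos hh one_pos hU hfU hfB
  exact ⟨measure_symmDiff_ball_eq_zero_of_setIntegral_radial_eq hω_pos hh one_pos hL hfL hfB
      (by linarith),
    measure_symmDiff_ball_eq_zero_of_setIntegral_radial_eq hω_pos hh one_pos hU hfU hfB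
      (by linarith)⟩

/-- Equality case of weighted mass transplantation: if h is strictly decreasing and
equality holds, ∫_{Ω_L} hω + ∫_{Ω_U} hω = 2∫_B hω, then Ω_L = B and Ω_U = B up to
sets of Lebesgue measure zero. -/
theorem weighted_mass_transplantation_equality (n : ℕ) (hn : 1 ≤ n)
    (ω h : ℝ → ℝ) (hω_meas : Measurable ω) (hω_pos : ∀ r, 0 < ω r)
    (hh : StrictAntiOn h (Set.Ici 0))
    (ΩL ΩU : Set (EuclideanSpace ℝ (Fin n)))
    (hL : MeasurableSet ΩL) (hU : MeasurableSet ΩU)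
    (hωL : IntegrableOn (fun x => ω ‖x‖) ΩL)
    (hωU : IntegrableOn (fun x => ω ‖x‖) ΩU)
    (hωB : IntegrableOn (fun x => ω ‖x‖) (ball (0 : EuclideanSpace ℝ (Fin n)) 1))
    (hvol : (∫ x in ΩL, ω ‖x‖) + (∫ x in ΩU, ω ‖x‖)
      = 2 * ∫ x in ball (0 : EuclideanSpace ℝ (Fin n)) 1, ω ‖x‖)
    (hhωL : IntegrableOn (fun x => h ‖x‖ * ω ‖x‖) ΩL)
    (hhωU : IntegrableOn (fun x => h ‖x‖ * ω ‖x‖) ΩU)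
    (hhωB : IntegrableOn (fun x => h ‖x‖ * ω ‖x‖) (ball (0 : EuclideanSpace ℝ (Fin n)) 1))
    (heq : (∫ x in ΩL, h ‖x‖ * ω ‖x‖) + (∫ x in ΩU, h ‖x‖ * ω ‖x‖)
      = 2 * ∫ x in ball (0 : EuclideanSpace ℝ (Fin n)) 1, h ‖x‖ * ω ‖x‖) :
    volume (ΩL ∆ ball (0 : EuclideanSpace ℝ (Fin n)) 1) = 0 ∧
      volume (ΩU ∆ ball (0 : EuclideanSpace ℝ (Fin n)) 1) = 0 :=
  weighted_mass_transplantation_equality_general n ω h hω_pos hh ΩL ΩU hL hU hωL hωU hωB hvol hhωL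
    hhωU hhωB heq
end

section
/- Let g : [0,∞) → ℝ be C¹ with g(0)=0 and g(r) > 0 for r > 0, and let v(y) = g(|y|) y/|y|. Suppose Ω ⊂ ℝ^n is bounded measurable, H = {y : y·p < t} is a halfspace, F_H is the fold map (identity on H, reflection across ∂H otherwise), and c ∈ ℝ^n satisfies c·p ≥ t (i.e., c ∉ H). Then ∫_Ω v(F_H(y) − c) dy ≠ 0 provided Ω \ ∂H has positive measure. -/
/-!
Folding across `∂H` gives `⟪F_H y, p⟫ = min ⟪y, p⟫ (2t - ⟪y, p⟫) ≤ t ≤ ⟪c, p⟫`, with strict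
inequality off `∂H`. Since `v z` is a nonnegative multiple of `z`, the `p`-component of
`v (F_H y - c)` is `≤ 0` everywhere and `< 0` on `Ω \ ∂H`, a set of positive measure, so the
`p`-component of the integral is negative. Integrability holds because `‖v z‖ ≤ |g ‖z‖|`
and `Ω` has compact closure.
-/

open MeasureTheory
open scoped RealInnerProductSpace

section

variable {E : Type*} [NormedAddCommGroup E] [InnerProductSpace ℝ E]

noncomputable def radialField (g : ℝ → ℝ) (z : E) : E := (g ‖z‖ / ‖z‖) • z

theorem norm_radialField_le (g : ℝ → ℝ) (z : E) : ‖radialField g z‖ ≤ |g ‖z‖| := by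
  rcases eq_or_ne z 0 with rfl | hz
  · simp [radialField]
  · rw [radialField, norm_smul, Real.norm_eq_abs, abs_div, abs_norm,
      div_mul_cancel₀ _ (norm_ne_zero_iff.mpr hz)]

theorem inner_radialField_neg {g : ℝ → ℝ} (hg : ∀ r > 0, 0 < g r) {z p : E}
    (hz : ⟪z, p⟫ < 0) : ⟪radialField g z, p⟫ < 0 := by
  have hz0 : 0 < ‖z‖ := norm_pos_iff.mpr (by rintro rfl; simp at hz)
  rw [radialField, real_inner_smul_left]
  exact mul_neg_of_pos_of_neg (div_pos (hg _ hz0) hz0) hz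

theorem inner_radialField_nonpos {g : ℝ → ℝ} (hg : ∀ r > 0, 0 < g r) {z p : E}
    (hz : ⟪z, p⟫ ≤ 0) : ⟪radialField g z, p⟫ ≤ 0 := by
  rcases hz.lt_or_eq with hz | hz
  · exact (inner_radialField_neg hg hz).le
  · rw [radialField, real_inner_smul_left, hz, mul_zero]

theorem integrableOn_radialField_comp {X : Type*} [TopologicalSpace X] [T2Space X]
    [MeasurableSpace X] [OpensMeasurableSpace X] [SecondCountableTopology X]
    {μ : Measure X} [IsFiniteMeasureOnCompacts μ]
    {g : ℝ → ℝ} (hg : Continuous g) {w : X → E} (hw : Continuous w)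
    {K : Set X} (hK : IsCompact K) :
    IntegrableOn (fun x => radialField g (w x)) K μ := by
  refine Integrable.mono' (g := fun x => |g ‖w x‖|)
    ((by fun_prop : Continuous fun x => |g ‖w x‖|).continuousOn.integrableOn_compact hK)
    ?_ (Filter.Eventually.of_forall fun x => norm_radialField_le g (w x))
  have hcoeff : Measurable fun x => g ‖w x‖ / ‖w x‖ := by fun_prop
  exact hcoeff.aestronglyMeasurable.smul hw.aestronglyMeasurable

noncomputable def fold (p : E) (t : ℝ) (y : E) : E :=
  if ⟪y, p⟫ < t then y else y + (2 * (t - ⟪y, p⟫)) • p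

theorem fold_eq_add_min (p : E) (t : ℝ) (y : E) :
    fold p t y = y + (2 * min (t - ⟪y, p⟫) 0) • p := by
  unfold fold
  split_ifs with h
  · rw [min_eq_right (by linarith), mul_zero, zero_smul, add_zero]
  · rw [min_eq_left (by linarith)]

theorem continuous_fold (p : E) (t : ℝ) : Continuous (fold p t) := by
  simp_rw [funext (fold_eq_add_min p t)]
  fun_prop

theorem inner_fold {p : E} (hp : ‖p‖ = 1) (t : ℝ) (y : E) :
    ⟪fold p t y, p⟫ = min ⟪y, p⟫ (2 * t - ⟪y, p⟫) := by
  rw [fold_eq_add_min, inner_add_left, real_inner_smul_left, real_inner_self_eq_norm_sq, hp]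
  rcases le_total ⟪y, p⟫ t with h | h
  · rw [min_eq_right (by linarith), min_eq_left (by linarith)]; ring
  · rw [min_eq_left (by linarith), min_eq_right (by linarith)]; ring

theorem inner_fold_le {p : E} (hp : ‖p‖ = 1) (t : ℝ) (y : E) : ⟪fold p t y, p⟫ ≤ t := by
  rw [inner_fold hp]
  rcases le_total ⟪y, p⟫ t with h | h
  · exact (min_le_left _ _).trans h
  · exact (min_le_right _ _).trans (by linarith)

theorem inner_fold_lt {p : E} (hp : ‖p‖ = 1) {t : ℝ} {y : E} (hy : ⟪y, p⟫ ≠ t) :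
    ⟪fold p t y, p⟫ < t := by
  rw [inner_fold hp]
  rcases hy.lt_or_gt with h | h
  · exact (min_le_left _ _).trans_lt h
  · exact (min_le_right _ _).trans_lt (by linarith)

end

theorem setIntegral_ne_zero_of_inner_nonpos {X E : Type*} [MeasurableSpace X] {μ : Measure X}
    [NormedAddCommGroup E] [InnerProductSpace ℝ E] [CompleteSpace E]
    {f : X → E} {s : Set X} (hf : IntegrableOn f s μ) {p : E}
    (hle : ∀ x, ⟪f x, p⟫ ≤ 0) (hneg : 0 < μ ({x | ⟪f x, p⟫ < 0} ∩ s)) :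
    ∫ x in s, f x ∂μ ≠ 0 := by
  have hpos : 0 < ∫ x in s, -⟪f x, p⟫ ∂μ := by
    rw [setIntegral_pos_iff_support_of_nonneg_ae
      (Filter.Eventually.of_forall fun x => neg_nonneg.mpr (hle x)) (hf.inner_const p).neg]
    convert hneg using 3
    ext x
    simp [lt_iff_le_and_ne, hle x]
  intro h0
  simp_rw [integral_neg, real_inner_comm p, integral_inner hf p, h0, inner_zero_right,
    neg_zero] at hpos
  exact hpos.false

theorem fold_integral_ne_zero_general (n : ℕ)
    (g : ℝ → ℝ) (hg : ContDiff ℝ 1 g) (hgpos : ∀ r > 0, 0 < g r)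
    (v : EuclideanSpace ℝ (Fin n) → EuclideanSpace ℝ (Fin n))
    (hv : ∀ y, v y = (g ‖y‖ / ‖y‖) • y)
    (p : EuclideanSpace ℝ (Fin n)) (hp : ‖p‖ = 1) (t : ℝ)
    (F : EuclideanSpace ℝ (Fin n) → EuclideanSpace ℝ (Fin n))
    (hF : ∀ y, F y = if ⟪y, p⟫ < t then y else y + (2 * (t - ⟪y, p⟫)) • p)
    (c : EuclideanSpace ℝ (Fin n)) (hc : t ≤ ⟪c, p⟫)
    (Ω : Set (EuclideanSpace ℝ (Fin n)))
    (hΩbdd : Bornology.IsBounded Ω)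
    (hΩpos : 0 < volume (Ω \ {y | ⟪y, p⟫ = t})) :
    (∫ y in Ω, v (F y - c)) ≠ 0 := by
  obtain rfl : v = radialField g := funext hv
  obtain rfl : F = fold p t := funext hF
  have hint : IntegrableOn (fun y => radialField g (fold p t y - c)) Ω :=
    (integrableOn_radialField_comp hg.continuous ((continuous_fold p t).sub continuous_const)
      hΩbdd.isCompact_closure).mono_set subset_closure
  refine setIntegral_ne_zero_of_inner_nonpos (p := p) hint
    (fun y => inner_radialField_nonpos hgpos ?_) (hΩpos.trans_le (measure_mono ?_))
  · rw [inner_sub_left]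
    linarith [inner_fold_le hp t y]
  · rintro y ⟨hyΩ, hyt⟩
    refine ⟨inner_radialField_neg hgpos ?_, hyΩ⟩
    rw [inner_sub_left]
    linarith [inner_fold_lt hp hyt]

/-- If the centering point c lies outside the open halfspace H = {y·p < t}, and the
bounded set Ω is not a.e. contained in the hyperplane ∂H, then the folded trial
vector field has nonzero integral: ∫_Ω v(F_H(y) − c) dy ≠ 0.  Here
v(y) = g(|y|)y/|y| with g C¹, g(0) = 0 and g > 0 on (0,∞), and F_H is the fold map
fixing H and reflecting its complement across ∂H. -/
theorem fold_integral_ne_zero (n : ℕ) (hn : 2 ≤ n)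
    (g : ℝ → ℝ) (hg : ContDiff ℝ 1 g) (hg0 : g 0 = 0) (hgpos : ∀ r > 0, 0 < g r)
    (v : EuclideanSpace ℝ (Fin n) → EuclideanSpace ℝ (Fin n))
    (hv : ∀ y, v y = (g ‖y‖ / ‖y‖) • y)
    (p : EuclideanSpace ℝ (Fin n)) (hp : ‖p‖ = 1) (t : ℝ)
    (F : EuclideanSpace ℝ (Fin n) → EuclideanSpace ℝ (Fin n))
    (hF : ∀ y, F y = if ⟪y, p⟫ < t then y else y + (2 * (t - ⟪y, p⟫)) • p)
    (c : EuclideanSpace ℝ (Fin n)) (hc : t ≤ ⟪c, p⟫)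
    (Ω : Set (EuclideanSpace ℝ (Fin n))) (hΩmeas : MeasurableSet Ω)
    (hΩbdd : Bornology.IsBounded Ω)
    (hΩpos : 0 < volume (Ω \ {y | ⟪y, p⟫ = t})) :
    (∫ y in Ω, v (F y - c)) ≠ 0 :=
  fold_integral_ne_zero_general n g hg hgpos v hv p hp t F hF c hc Ω hΩbdd hΩpos
end

section
/- Let g be a C² solution on (0,1) of the Bessel-type ODE −g″ = ((n−1)/r) g′ + (μ − (n−1)/r²) g, where μ > 0, with g > 0 and g′ ≥ 0 on (0,1). Then h(r) = g′(r)² + (n−1)g(r)²/r² − μ g(r)² satisfies h′(r) = −2((n−1)/r)(g′(r) − g(r)/r)² − 4μ g(r) g′(r) < 0 for r ∈ (0,1) (strict whenever g′(r) > 0 or g′(r) ≠ g(r)/r). -/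
/-! Differentiate `h` by the product and quotient rules and eliminate `g″` with the ODE: the terms
in `g′²`, `g g′ / r²` and `g² / r³` then combine into the square `-2 ((n-1)/r) (g′ - g/r)²`, which is
`≤ 0`, while the remaining term `-4 μ g g′` is `≤ 0` because `g > 0`, `g′ ≥ 0`. -/

lemma hasDerivAt_sq_add_div_sq_sub_of_ode {c μ r : ℝ} {g g' g'' : ℝ → ℝ} (hr : r ≠ 0)
    (hg : HasDerivAt g (g' r) r) (hg' : HasDerivAt g' (g'' r) r)
    (hode : -g'' r = c / r * g' r + (μ - c / r ^ 2) * g r) :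
    HasDerivAt (fun s => g' s ^ 2 + c * g s ^ 2 / s ^ 2 - μ * g s ^ 2)
      (-2 * (c / r) * (g' r - g r / r) ^ 2 - 4 * μ * g r * g' r) r := by
  have hprod := ((hg'.fun_pow 2).fun_add (((hg.fun_pow 2).const_mul c).fun_div
    ((hasDerivAt_id' r).fun_pow 2) (pow_ne_zero 2 hr))).fun_sub ((hg.fun_pow 2).const_mul μ)
  refine hprod.congr_deriv ?_
  rw [show g'' r = -(c / r * g' r + (μ - c / r ^ 2) * g r) by linarith]
  field_simp
  ring

lemma neg_mul_sq_sub_mul_neg {c μ r x y : ℝ} (hc : 0 < c) (hμ : 0 < μ) (hr : 0 < r)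
    (hx : 0 < x) (hy : 0 ≤ y) (h : 0 < y ∨ y ≠ x / r) :
    -2 * (c / r) * (y - x / r) ^ 2 - 4 * μ * x * y < 0 := by
  rcases h with hy' | hne
  · have hsq : 0 ≤ c / r * (y - x / r) ^ 2 := by positivity
    have hxy : 0 < μ * x * y := by positivity
    linarith
  · have hsq : 0 < c / r * (y - x / r) ^ 2 :=
      mul_pos (div_pos hc hr) (sq_pos_of_ne_zero (sub_ne_zero.mpr hne))
    have hxy : 0 ≤ μ * x * y := by positivity
    linarith

/-- Weinberger's monotonicity computation: if g solves the Bessel-type ODE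
−g″ = ((n−1)/r)g′ + (μ − (n−1)/r²)g on (0,1) with μ > 0, g > 0 and g′ ≥ 0, then
h(r) = g′(r)² + (n−1)g(r)²/r² − μg(r)² has derivative
h′(r) = −2((n−1)/r)(g′(r) − g(r)/r)² − 4μ g(r) g′(r), which is < 0 whenever
g′(r) > 0 or g′(r) ≠ g(r)/r. -/
theorem weinberger_h_derivative (n : ℕ) (hn : 2 ≤ n) (μ : ℝ) (hμ : 0 < μ)
    (g g' g'' : ℝ → ℝ)
    (hg' : ∀ r ∈ Set.Ioo (0 : ℝ) 1, HasDerivAt g (g' r) r)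
    (hg'' : ∀ r ∈ Set.Ioo (0 : ℝ) 1, HasDerivAt g' (g'' r) r)
    (hODE : ∀ r ∈ Set.Ioo (0 : ℝ) 1,
      -g'' r = ((n : ℝ) - 1) / r * g' r + (μ - ((n : ℝ) - 1) / r ^ 2) * g r)
    (hgpos : ∀ r ∈ Set.Ioo (0 : ℝ) 1, 0 < g r)
    (hg'nonneg : ∀ r ∈ Set.Ioo (0 : ℝ) 1, 0 ≤ g' r) :
    ∀ r ∈ Set.Ioo (0 : ℝ) 1,
      HasDerivAt (fun s => g' s ^ 2 + ((n : ℝ) - 1) * g s ^ 2 / s ^ 2 - μ * g s ^ 2)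
        (-2 * (((n : ℝ) - 1) / r) * (g' r - g r / r) ^ 2 - 4 * μ * g r * g' r) r ∧
      ((0 < g' r ∨ g' r ≠ g r / r) →
        -2 * (((n : ℝ) - 1) / r) * (g' r - g r / r) ^ 2 - 4 * μ * g r * g' r < 0) := by
  intro r hr
  have hc : (0 : ℝ) < n - 1 := by
    have : (2 : ℝ) ≤ n := by exact_mod_cast hn
    linarith
  exact ⟨hasDerivAt_sq_add_div_sq_sub_of_ode hr.1.ne' (hg' r hr) (hg'' r hr) (hODE r hr),
    neg_mul_sq_sub_mul_neg hc hμ hr.1 (hgpos r hr) (hg'nonneg r hr)⟩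
end
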